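/- arXiv:2202.09015 — 2 statements merged into one kernel-verified Lean document; each statement's English description precedes it below -/
import Mathlib

section
/- Let α ∈ (1,2) and fix t ∈ (0,1]. Define η₁(s) = ((t-s)^(α-2) - t^(α-2)(1-s)^(α-1))/s^(α-1) for s ∈ (0, t/2]. Then η₁ is nonnegative, bounded on (0, t/2], and η₁(s) → 0 as s → 0⁺; in particular η₁ extends continuously to [0, t/2] with value 0 at s = 0. -/
open Set Filter Real

theorem stmt8 (α t : ℝ) (hα1 : 1 < α) (hα2 : α < 2) (ht : t ∈ Set.Ioc (0:ℝ) 1) :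
    (∀ s ∈ Set.Ioc (0:ℝ) (t / 2),
        0 ≤ ((t - s) ^ (α - 2) - t ^ (α - 2) * (1 - s) ^ (α - 1)) / s ^ (α - 1)) ∧
    (∃ C : ℝ, ∀ s ∈ Set.Ioc (0:ℝ) (t / 2),
        ((t - s) ^ (α - 2) - t ^ (α - 2) * (1 - s) ^ (α - 1)) / s ^ (α - 1) ≤ C) ∧
    Filter.Tendsto (fun s => ((t - s) ^ (α - 2) - t ^ (α - 2) * (1 - s) ^ (α - 1)) / s ^ (α - 1))
      (nhdsWithin 0 (Set.Ioi 0)) (nhds 0) ∧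
    ∃ η : ℝ → ℝ, ContinuousOn η (Set.Icc 0 (t / 2)) ∧ η 0 = 0 ∧
      ∀ s ∈ Set.Ioc (0:ℝ) (t / 2),
        η s = ((t - s) ^ (α - 2) - t ^ (α - 2) * (1 - s) ^ (α - 1)) / s ^ (α - 1) := by
  obtain ⟨ht0, ht1⟩ := ht
  have ht2 : (0:ℝ) < t / 2 := by linarith
  have h2α : (0:ℝ) < 2 - α := by linarith
  have hα1' : (0:ℝ) < α - 1 := by linarith
  set f : ℝ → ℝ := fun s => ((t - s) ^ (α - 2) - t ^ (α - 2) * (1 - s) ^ (α - 1)) / s ^ (α - 1)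
    with hfdef
  set g : ℝ → ℝ := fun s => (t - s) ^ (α - 2) - t ^ (α - 2) * (1 - s) ^ (α - 1) with hgdef
  -- nonnegativity of numerator
  have hnum : ∀ s ∈ Set.Ioc (0:ℝ) (t / 2), 0 ≤ g s := by
    intro s hs
    obtain ⟨hs0, hs2⟩ := hs
    have hts : 0 < t - s := by linarith
    have h1s : 0 < 1 - s := by linarith
    have key : t - s ≤ t * (1 - s) := by nlinarith
    have h1 : (t * (1 - s)) ^ (α - 2) ≤ (t - s) ^ (α - 2) :=
      Real.rpow_le_rpow_of_nonpos hts key (by linarith)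
    have h2 : (t * (1 - s)) ^ (α - 2) = t ^ (α - 2) * (1 - s) ^ (α - 2) :=
      Real.mul_rpow ht0.le h1s.le
    have h3 : (1 - s) ^ (α - 1) ≤ (1 - s) ^ (α - 2) :=
      Real.rpow_le_rpow_of_exponent_ge h1s (by linarith) (by linarith)
    have h4 : t ^ (α - 2) * (1 - s) ^ (α - 1) ≤ t ^ (α - 2) * (1 - s) ^ (α - 2) :=
      mul_le_mul_of_nonneg_left h3 (Real.rpow_nonneg ht0.le _)
    simp only [hgdef]
    rw [h2] at h1
    linarith
  have hfnn : ∀ s ∈ Set.Ioc (0:ℝ) (t / 2), 0 ≤ f s := fun s hs =>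
    div_nonneg (hnum s hs) (Real.rpow_nonneg hs.1.le _)
  -- MVT bound on the numerator
  set K : ℝ := (2 - α) * (t / 2) ^ (α - 3) + (α - 1) * t ^ (α - 2) * (1 / 2) ^ (α - 2) with hK
  have hK0 : 0 ≤ K :=
    add_nonneg (mul_nonneg h2α.le (Real.rpow_nonneg ht2.le _))
      (mul_nonneg (mul_nonneg hα1'.le (Real.rpow_nonneg ht0.le _))
        (Real.rpow_nonneg (by norm_num) _))
  set g' : ℝ → ℝ := fun x => (2 - α) * (t - x) ^ (α - 3) +
      (α - 1) * t ^ (α - 2) * (1 - x) ^ (α - 2) with hg'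
  have hderiv : ∀ x ∈ Set.Icc (0:ℝ) (t / 2), HasDerivWithinAt g (g' x) (Set.Icc 0 (t / 2)) x := by
    intro x hx
    obtain ⟨hx0, hx2⟩ := hx
    have htx : 0 < t - x := by linarith
    have h1x : 0 < 1 - x := by linarith
    have d0 : HasDerivAt (fun y : ℝ => t - y) (-1) x := by
      simpa using (hasDerivAt_id x).const_sub t
    have d0' : HasDerivAt (fun y : ℝ => 1 - y) (-1) x := by
      simpa using (hasDerivAt_id x).const_sub (1:ℝ)
    have d1 : HasDerivAt (fun y => (t - y) ^ (α - 2)) ((-1) * (α - 2) * (t - x) ^ (α - 2 - 1)) x :=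
      d0.rpow_const (Or.inl htx.ne')
    have d2 : HasDerivAt (fun y => t ^ (α - 2) * (1 - y) ^ (α - 1))
        (t ^ (α - 2) * ((-1) * (α - 1) * (1 - x) ^ (α - 1 - 1))) x :=
      (d0'.rpow_const (Or.inl h1x.ne')).const_mul _
    have hD := d1.sub d2
    have heq : (-1) * (α - 2) * (t - x) ^ (α - 2 - 1) -
        t ^ (α - 2) * ((-1) * (α - 1) * (1 - x) ^ (α - 1 - 1)) = g' x := by
      rw [hg', show α - 2 - 1 = α - 3 by ring, show α - 1 - 1 = α - 2 by ring]
      ring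
    rw [heq] at hD
    exact hD.hasDerivWithinAt
  have hbound' : ∀ x ∈ Set.Icc (0:ℝ) (t / 2), ‖g' x‖ ≤ K := by
    intro x hx
    obtain ⟨hx0, hx2⟩ := hx
    have htx : t / 2 ≤ t - x := by linarith
    have h1x : (1:ℝ) / 2 ≤ 1 - x := by linarith
    have b1 : (t - x) ^ (α - 3) ≤ (t / 2) ^ (α - 3) :=
      Real.rpow_le_rpow_of_nonpos ht2 htx (by linarith)
    have b2 : (1 - x) ^ (α - 2) ≤ (1 / 2) ^ (α - 2) :=
      Real.rpow_le_rpow_of_nonpos (by norm_num) h1x (by linarith)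
    have hg'nn : 0 ≤ g' x :=
      add_nonneg (mul_nonneg h2α.le (Real.rpow_nonneg (by linarith) _))
        (mul_nonneg (mul_nonneg hα1'.le (Real.rpow_nonneg ht0.le _))
          (Real.rpow_nonneg (by linarith) _))
    rw [Real.norm_eq_abs, abs_of_nonneg hg'nn, hg', hK]
    have i1 := mul_le_mul_of_nonneg_left b1 h2α.le
    have i2 := mul_le_mul_of_nonneg_left b2
      (mul_nonneg hα1'.le (Real.rpow_nonneg ht0.le (α - 2)))
    linarith [i1, i2]
  have hg0 : g 0 = 0 := by
    simp [hgdef, Real.one_rpow]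
  have hgle : ∀ s ∈ Set.Ioc (0:ℝ) (t / 2), g s ≤ K * s := by
    intro s hs
    have hsI : s ∈ Set.Icc (0:ℝ) (t / 2) := ⟨hs.1.le, hs.2⟩
    have h0I : (0:ℝ) ∈ Set.Icc (0:ℝ) (t / 2) := ⟨le_refl _, ht2.le⟩
    have hm := (convex_Icc (0:ℝ) (t / 2)).norm_image_sub_le_of_norm_hasDerivWithin_le
      hderiv hbound' h0I hsI
    rw [hg0, sub_zero, sub_zero, Real.norm_eq_abs, Real.norm_eq_abs,
      abs_of_nonneg hs.1.le] at hm
    exact (le_abs_self _).trans hm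
  have hfle : ∀ s ∈ Set.Ioc (0:ℝ) (t / 2), f s ≤ K * s ^ (2 - α) := by
    intro s hs
    have hs0 := hs.1
    have hd : 0 < s ^ (α - 1) := Real.rpow_pos_of_pos hs0 _
    have h1 : f s ≤ K * s / s ^ (α - 1) := by
      show g s / s ^ (α - 1) ≤ K * s / s ^ (α - 1)
      gcongr
      exact hgle s hs
    have h2 : K * s / s ^ (α - 1) = K * s ^ (2 - α) := by
      rw [div_eq_iff hd.ne', mul_assoc, ← Real.rpow_add hs0,
        show (2 - α) + (α - 1) = 1 by ring, Real.rpow_one]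
    rw [h2] at h1
    exact h1
  -- tendsto of the upper bound
  have hup : Filter.Tendsto (fun s : ℝ => K * s ^ (2 - α)) (nhdsWithin 0 (Set.Ioi 0)) (nhds 0) := by
    have hc : Filter.Tendsto (fun s : ℝ => s ^ (2 - α)) (nhds 0) (nhds ((0:ℝ) ^ (2 - α))) :=
      Real.continuousAt_rpow_const 0 (2 - α) (Or.inr h2α.le)
    have h2 : Filter.Tendsto (fun s : ℝ => K * s ^ (2 - α)) (nhds 0)
        (nhds (K * (0:ℝ) ^ (2 - α))) := hc.const_mul K
    rw [Real.zero_rpow h2α.ne', mul_zero] at h2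
    exact h2.mono_left nhdsWithin_le_nhds
  have hmem : Set.Ioc (0:ℝ) (t / 2) ∈ nhdsWithin (0:ℝ) (Set.Ioi 0) :=
    Ioc_mem_nhdsGT_of_mem ⟨le_refl _, ht2⟩
  have htendf : Filter.Tendsto f (nhdsWithin 0 (Set.Ioi 0)) (nhds 0) := by
    refine tendsto_of_tendsto_of_tendsto_of_le_of_le' tendsto_const_nhds hup ?_ ?_
    · filter_upwards [hmem] with x hx using hfnn x hx
    · filter_upwards [hmem] with x hx using hfle x hx
  refine ⟨hfnn, ⟨K * (t / 2) ^ (2 - α), ?_⟩, htendf, ?_⟩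
  · intro s hs
    refine (hfle s hs).trans ?_
    exact mul_le_mul_of_nonneg_left (Real.rpow_le_rpow hs.1.le hs.2 h2α.le) hK0
  · -- continuous extension
    set η : ℝ → ℝ := fun s => if s ≤ 0 then 0 else f s with hη
    have hη0 : η 0 = 0 := by simp [hη]
    refine ⟨η, ?_, hη0, fun s hs => by simp [hη, hfdef, not_le.mpr hs.1]⟩
    intro s hs
    rcases eq_or_lt_of_le hs.1 with h0 | hpos
    · -- s = 0
      rw [← h0]
      have hIci : ContinuousWithinAt η (Set.Ici 0) 0 := by
        unfold ContinuousWithinAt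
        rw [hη0]
        have hIcieq : Set.Ici (0:ℝ) = {0} ∪ Set.Ioi 0 := by
          ext x
          simp [le_iff_lt_or_eq, eq_comm, or_comm]
        rw [hIcieq, nhdsWithin_union, tendsto_sup]
        constructor
        · rw [nhdsWithin_singleton]
          have : η 0 = 0 := hη0
          simpa [this] using tendsto_pure_nhds η 0
        · refine htendf.congr' ?_
          filter_upwards [self_mem_nhdsWithin] with x (hx : x ∈ Set.Ioi (0:ℝ))
          simp [hη, not_le.mpr (Set.mem_Ioi.mp hx)]
      exact hIci.mono Set.Icc_subset_Ici_self
    · -- s > 0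
      have hts : 0 < t - s := by
        have := hs.2
        linarith
      have h1s : 0 < 1 - s := by
        have := hs.2
        linarith
      have c1 : ContinuousAt (fun x : ℝ => (t - x) ^ (α - 2)) s :=
        (Real.continuousAt_rpow_const (t - s) (α - 2) (Or.inl hts.ne')).comp
          ((continuous_const.sub continuous_id).continuousAt)
      have c2 : ContinuousAt (fun x : ℝ => (1 - x) ^ (α - 1)) s :=
        (Real.continuousAt_rpow_const (1 - s) (α - 1) (Or.inl h1s.ne')).comp
          ((continuous_const.sub continuous_id).continuousAt)
      have c3 : ContinuousAt (fun x : ℝ => x ^ (α - 1)) s :=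
        Real.continuousAt_rpow_const s (α - 1) (Or.inl hpos.ne')
      have hd : s ^ (α - 1) ≠ 0 := (Real.rpow_pos_of_pos hpos _).ne'
      have hfc : ContinuousAt f s := (c1.sub (c2.const_mul _)).div c3 hd
      have heq : ∀ᶠ x in nhds s, f x = η x := by
        filter_upwards [Ioi_mem_nhds hpos] with x (hx : (0:ℝ) < x)
        simp [hη, not_le.mpr hx]
      exact (hfc.congr heq).continuousWithinAt
end

section
/- Let α ∈ (1,2), g : (0,1] → [0,∞) continuous with ∫₀¹ s^(α-1) g(s) ds < ∞, and let F(t) = ∫₀ᵗ ((1-τ)^(α-1) - 1) g(τ) dτ + ∫ₜ¹ (1-τ)^(α-1) g(τ) dτ. Then t ↦ t^(α-1) F(t) extends to an absolutely continuous function on [0,1], with ∫₀¹ |(t^(α-1}F(t))'| dt < ∞. -/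
open MeasureTheory Set Filter
open scoped ENNReal Topology

theorem stmt13 (α : ℝ) (hα1 : 1 < α) (hα2 : α < 2) (g : ℝ → ℝ)
    (hc : ContinuousOn g (Ioc 0 1)) (hnn : ∀ s ∈ Ioc (0:ℝ) 1, 0 ≤ g s)
    (hH : IntegrableOn (fun s => s ^ (α - 1) * g s) (Ioc 0 1))
    (F : ℝ → ℝ)
    (hF : ∀ t, F t = (∫ τ in Ioc (0:ℝ) t, ((1 - τ) ^ (α - 1) - 1) * g τ) +
        ∫ τ in Ioc t 1, (1 - τ) ^ (α - 1) * g τ) :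
    IntegrableOn (fun t => |deriv (fun x => x ^ (α - 1) * F x) t|) (Ioo 0 1) ∧
    ∀ x ∈ Icc (0:ℝ) 1,
      x ^ (α - 1) * F x =
        (0:ℝ) ^ (α - 1) * F 0 + ∫ t in (0:ℝ)..x, deriv (fun y => y ^ (α - 1) * F y) t := by
  have hb : (0:ℝ) < α - 1 := by linarith
  have hb1 : α - 1 ≤ 1 := by linarith
  have hb2 : (-1:ℝ) < α - 2 := by linarith
  set ψ : ℝ → ℝ := fun τ => (1 - τ) ^ (α - 1) * g τ with hψdef
  set φ : ℝ → ℝ := fun τ => ((1 - τ) ^ (α - 1) - 1) * g τ with hφdef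
  set Pf : ℝ → ℝ := fun τ => τ ^ (α - 1) * g τ with hPfdef
  set A : ℝ → ℝ := fun t => ∫ τ in Ioc (0:ℝ) t, φ τ with hAdef
  set B : ℝ → ℝ := fun t => ∫ τ in Ioc t (1:ℝ), ψ τ with hBdef
  set P : ℝ → ℝ := fun u => ∫ τ in Ioc (0:ℝ) u, Pf τ with hPdef
  have hFAB : ∀ t, F t = A t + B t := by
    intro t
    rw [hF t]
  have hFfun : F = fun y => A y + B y := funext hFAB
  -- continuity of the kernels
  have hcpow : Continuous fun τ : ℝ => (1 - τ) ^ (α - 1) := by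
    rw [continuous_iff_continuousAt]
    intro τ
    exact (Real.continuousAt_rpow_const _ _ (Or.inr hb.le)).comp
      ((continuous_const.sub continuous_id).continuousAt)
  have hcψ : ContinuousOn ψ (Ioc 0 1) := hcpow.continuousOn.mul hc
  have hcφ : ContinuousOn φ (Ioc 0 1) := (hcpow.sub continuous_const).continuousOn.mul hc
  have hcψo : ContinuousOn ψ (Ioo 0 1) := hcψ.mono Ioo_subset_Ioc_self
  have hcφo : ContinuousOn φ (Ioo 0 1) := hcφ.mono Ioo_subset_Ioc_self
  -- nonnegativity and key pointwise bounds
  have hnnPf : ∀ τ ∈ Ioc (0:ℝ) 1, 0 ≤ Pf τ := fun τ hτ =>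
    mul_nonneg (Real.rpow_nonneg hτ.1.le _) (hnn τ hτ)
  have hnnψ : ∀ τ ∈ Ioc (0:ℝ) 1, 0 ≤ ψ τ := fun τ hτ =>
    mul_nonneg (Real.rpow_nonneg (by linarith [hτ.2]) _) (hnn τ hτ)
  have hψle1 : ∀ τ ∈ Ioc (0:ℝ) 1, (1 - τ) ^ (α - 1) ≤ 1 := fun τ hτ =>
    Real.rpow_le_one (by linarith [hτ.2]) (by linarith [hτ.1]) hb.le
  have hkey : ∀ τ ∈ Ioc (0:ℝ) 1, |φ τ| ≤ Pf τ := by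
    intro τ hτ
    have h1τ : (0:ℝ) ≤ 1 - τ := by linarith [hτ.2]
    have hge : 1 - τ ≤ (1 - τ) ^ (α - 1) := by
      rcases eq_or_lt_of_le h1τ with h | h
      · rw [← h, Real.zero_rpow hb.ne']
      · calc 1 - τ = (1 - τ) ^ (1:ℝ) := (Real.rpow_one _).symm
          _ ≤ (1 - τ) ^ (α - 1) := Real.rpow_le_rpow_of_exponent_ge h (by linarith [hτ.1]) hb1
    have hτle : τ ≤ τ ^ (α - 1) := by
      calc τ = τ ^ (1:ℝ) := (Real.rpow_one τ).symm
        _ ≤ τ ^ (α - 1) := Real.rpow_le_rpow_of_exponent_ge hτ.1 hτ.2 hb1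
    have habs : |(1 - τ) ^ (α - 1) - 1| ≤ τ ^ (α - 1) := by
      rw [abs_sub_comm, abs_of_nonneg (by linarith [hψle1 τ hτ])]
      linarith
    simp only [hφdef, hPfdef]
    rw [abs_mul, abs_of_nonneg (hnn τ hτ)]
    exact mul_le_mul_of_nonneg_right habs (hnn τ hτ)
  -- integrability of the kernels
  have hφ_int : IntegrableOn φ (Ioc 0 1) := by
    refine Integrable.mono' hH (hcφ.aestronglyMeasurable measurableSet_Ioc) ?_
    refine (ae_restrict_iff' measurableSet_Ioc).2 (Eventually.of_forall fun τ hτ => ?_)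
    simpa [Real.norm_eq_abs] using hkey τ hτ
  have hψ_int : ∀ s : ℝ, 0 < s → s ≤ 1 → IntegrableOn ψ (Icc s 1) := fun s hs hs1 =>
    (hcψ.mono fun τ hτ => ⟨lt_of_lt_of_le hs hτ.1, hτ.2⟩).integrableOn_compact isCompact_Icc
  -- splitting B
  have hBsplit : ∀ u v : ℝ, 0 < u → u ≤ v → v ≤ 1 →
      B u = (∫ τ in Ioc u v, ψ τ) + B v := by
    intro u v hu huv hv
    simp only [hBdef]
    rw [← MeasureTheory.setIntegral_union (Ioc_disjoint_Ioc_of_le le_rfl) measurableSet_Ioc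
      ((hψ_int u hu (huv.trans hv)).mono_set fun τ hτ => ⟨hτ.1.le, hτ.2.trans hv⟩)
      ((hψ_int v (lt_of_lt_of_le hu huv) hv).mono_set Ioc_subset_Icc_self),
      Ioc_union_Ioc_eq_Ioc huv hv]
  have hBnn : ∀ u : ℝ, 0 < u → 0 ≤ B u := by
    intro u hu
    simp only [hBdef]
    exact setIntegral_nonneg measurableSet_Ioc fun τ hτ =>
      hnnψ τ ⟨lt_trans hu hτ.1, hτ.2⟩
  -- bound on A
  have hAbd : ∀ u : ℝ, 0 < u → u ≤ 1 → |A u| ≤ P 1 := by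
    intro u hu hu1
    simp only [hAdef, hPdef]
    calc |∫ τ in Ioc (0:ℝ) u, φ τ| ≤ ∫ τ in Ioc (0:ℝ) u, |φ τ| := by
          simpa [Real.norm_eq_abs] using
            MeasureTheory.norm_integral_le_integral_norm (μ := volume.restrict (Ioc (0:ℝ) u)) φ
      _ ≤ ∫ τ in Ioc (0:ℝ) u, Pf τ := by
          refine setIntegral_mono_on ((hφ_int.mono_set (Ioc_subset_Ioc_right hu1)).abs)
            (hH.mono_set (Ioc_subset_Ioc_right hu1)) measurableSet_Ioc fun τ hτ => ?_
          exact hkey τ ⟨hτ.1, hτ.2.trans hu1⟩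
      _ ≤ ∫ τ in Ioc (0:ℝ) 1, Pf τ := by
          refine setIntegral_mono_set hH ?_ (HasSubset.Subset.eventuallyLE (Ioc_subset_Ioc_right hu1))
          exact (ae_restrict_iff' measurableSet_Ioc).2 (Eventually.of_forall fun τ hτ => hnnPf τ hτ)
  -- derivatives
  have hAd : ∀ x ∈ Ioo (0:ℝ) 1, HasDerivAt A (φ x) x := by
    intro x hx
    have hint : IntervalIntegrable φ volume 0 x :=
      (intervalIntegrable_iff_integrableOn_Ioc_of_le hx.1.le).2
        (hφ_int.mono_set (Ioc_subset_Ioc_right hx.2.le))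
    have hd := intervalIntegral.integral_hasDerivAt_right hint
      (hcφo.stronglyMeasurableAtFilter isOpen_Ioo x hx)
      (hcφo.continuousAt (isOpen_Ioo.mem_nhds hx))
    refine hd.congr_of_eventuallyEq ?_
    filter_upwards [Ioi_mem_nhds hx.1] with u hu
    show A u = ∫ t in (0:ℝ)..u, φ t
    rw [intervalIntegral.integral_of_le (le_of_lt hu)]
  have hBd : ∀ x ∈ Ioo (0:ℝ) 1, HasDerivAt B (-ψ x) x := by
    intro x hx
    have hx2 : 0 < x / 2 := by linarith [hx.1]
    have hint : IntervalIntegrable ψ volume (x / 2) x :=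
      (intervalIntegrable_iff_integrableOn_Ioc_of_le (by linarith [hx.1])).2
        ((hψ_int (x / 2) hx2 (by linarith [hx.2])).mono_set
          fun τ hτ => ⟨hτ.1.le, hτ.2.trans hx.2.le⟩)
    have hd := (intervalIntegral.integral_hasDerivAt_right hint
      (hcψo.stronglyMeasurableAtFilter isOpen_Ioo x hx)
      (hcψo.continuousAt (isOpen_Ioo.mem_nhds hx))).const_sub (B (x / 2))
    refine hd.congr_of_eventuallyEq ?_
    filter_upwards [isOpen_Ioo.mem_nhds (⟨by linarith [hx.1], hx.2⟩ : x ∈ Ioo (x/2) 1)] with u hu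
    show B u = B (x / 2) - ∫ t in (x/2)..u, ψ t
    rw [intervalIntegral.integral_of_le hu.1.le]
    have := hBsplit (x / 2) u hx2 hu.1.le hu.2.le
    linarith
  have hFd : ∀ x ∈ Ioo (0:ℝ) 1, HasDerivAt F (-g x) x := by
    intro x hx
    rw [hFfun]
    have : HasDerivAt (fun y => A y + B y) (φ x + -ψ x) x := (hAd x hx).add (hBd x hx)
    convert this using 1
    simp only [hφdef, hψdef]
    ring
  set h : ℝ → ℝ := fun y => y ^ (α - 1) * F y with hhdef
  set D : ℝ → ℝ := fun t => (α - 1) * (t ^ (α - 2) * F t) - t ^ (α - 1) * g t with hDdef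
  have hhd : ∀ x ∈ Ioo (0:ℝ) 1, HasDerivAt h (D x) x := by
    intro x hx
    have hr : HasDerivAt (fun y : ℝ => y ^ (α - 1)) ((α - 1) * x ^ (α - 1 - 1)) x :=
      Real.hasDerivAt_rpow_const (Or.inl hx.1.ne')
    have hm := hr.mul (hFd x hx)
    have hexp : α - 1 - 1 = α - 2 := by ring
    rw [hexp] at hm
    have hval : D x = (α - 1) * x ^ (α - 2) * F x + x ^ (α - 1) * -g x := by
      simp only [hDdef]; ring
    rw [hhdef, hval]
    exact hm
  -- integrability of the rpow weight
  have I_pow : IntegrableOn (fun t : ℝ => t ^ (α - 2)) (Ioo 0 1) :=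
    (intervalIntegrable_iff_integrableOn_Ioo_of_le zero_le_one).1 (intervalIntegral.intervalIntegrable_rpow' hb2)
  -- Tonelli: integrability of t ^ (α-2) * B t
  have hψm : AEMeasurable ψ (volume.restrict (Ioc (0:ℝ) 1)) := hcψ.aemeasurable measurableSet_Ioc
  set K : ℝ × ℝ → ℝ≥0∞ := fun p =>
    ENNReal.ofReal (ψ p.2) *
      ({q : ℝ × ℝ | q.1 < q.2}.indicator (fun q => ENNReal.ofReal (q.1 ^ (α - 2))) p) with hKdef
  have hKm : AEMeasurable K ((volume.restrict (Ioo (0:ℝ) 1)).prod (volume.restrict (Ioc (0:ℝ) 1))) := by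
    have h1 : AEMeasurable (fun p : ℝ × ℝ => ENNReal.ofReal (ψ p.2))
        ((volume.restrict (Ioo (0:ℝ) 1)).prod (volume.restrict (Ioc (0:ℝ) 1))) :=
      hψm.ennreal_ofReal.comp_quasiMeasurePreserving Measure.quasiMeasurePreserving_snd
    have h2 : Measurable fun p : ℝ × ℝ =>
        ({q : ℝ × ℝ | q.1 < q.2}.indicator (fun q => ENNReal.ofReal (q.1 ^ (α - 2))) p) :=
      ((measurable_fst.pow measurable_const).ennreal_ofReal).indicator
        (measurableSet_lt measurable_fst measurable_snd)
    exact h1.mul h2.aemeasurable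
  have I_B : IntegrableOn (fun t => t ^ (α - 2) * B t) (Ioo 0 1) := by
    refine ⟨(ContinuousOn.aestronglyMeasurable (fun x hx =>
      ((Real.continuousAt_rpow_const x (α - 2) (Or.inl hx.1.ne')).mul
        (hBd x hx).continuousAt).continuousWithinAt) measurableSet_Ioo), ?_⟩
    rw [hasFiniteIntegral_iff_norm]
    have step1 : ∀ t ∈ Ioo (0:ℝ) 1, ENNReal.ofReal ‖t ^ (α - 2) * B t‖ =
        ∫⁻ τ, K (t, τ) ∂(volume.restrict (Ioc (0:ℝ) 1)) := by
      intro t ht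
      have hψnn : 0 ≤ᵐ[volume.restrict (Ioc t 1)] ψ :=
        (ae_restrict_iff' measurableSet_Ioc).2 (Eventually.of_forall fun τ hτ =>
          hnnψ τ ⟨lt_trans ht.1 hτ.1, hτ.2⟩)
      have htB : ENNReal.ofReal (B t) = ∫⁻ τ in Ioc t 1, ENNReal.ofReal (ψ τ) := by
        simp only [hBdef]
        exact ofReal_integral_eq_lintegral_ofReal
          ((hψ_int t ht.1 ht.2.le).mono_set Ioc_subset_Icc_self) hψnn
      have hK : ∀ τ, K (t, τ) =
          (Ioi t).indicator (fun τ' => ENNReal.ofReal (ψ τ') * ENNReal.ofReal (t ^ (α - 2))) τ := by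
        intro τ
        simp only [hKdef, Set.indicator_apply, Set.mem_setOf_eq, mem_Ioi]
        by_cases hc' : t < τ <;> simp [hc']
      have hset : Ioi t ∩ Ioc (0:ℝ) 1 = Ioc t 1 := by
        ext τ
        simp only [mem_inter_iff, mem_Ioi, mem_Ioc]
        exact ⟨fun hh => ⟨hh.1, hh.2.2⟩, fun hh => ⟨hh.1, lt_trans ht.1 hh.1, hh.2⟩⟩
      calc ENNReal.ofReal ‖t ^ (α - 2) * B t‖
          = ENNReal.ofReal (t ^ (α - 2)) * ENNReal.ofReal (B t) := by
            rw [Real.norm_eq_abs, abs_mul, abs_of_nonneg (Real.rpow_nonneg ht.1.le _),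
              abs_of_nonneg (hBnn t ht.1), ENNReal.ofReal_mul (Real.rpow_nonneg ht.1.le _)]
        _ = ∫⁻ τ, K (t, τ) ∂(volume.restrict (Ioc (0:ℝ) 1)) := by
            rw [htB, lintegral_congr hK, lintegral_indicator measurableSet_Ioi,
              Measure.restrict_restrict measurableSet_Ioi, hset,
              lintegral_mul_const' _ _ ENNReal.ofReal_ne_top, mul_comm]
    have hstep : (∫⁻ t, ENNReal.ofReal ‖t ^ (α - 2) * B t‖ ∂(volume.restrict (Ioo (0:ℝ) 1))) =
        ∫⁻ t, (∫⁻ τ, K (t, τ) ∂(volume.restrict (Ioc (0:ℝ) 1))) ∂(volume.restrict (Ioo (0:ℝ) 1)) :=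
      lintegral_congr_ae ((ae_restrict_mem measurableSet_Ioo).mono fun t ht => step1 t ht)
    have hswap : (∫⁻ t, ∫⁻ τ, K (t, τ) ∂(volume.restrict (Ioc (0:ℝ) 1))
          ∂(volume.restrict (Ioo (0:ℝ) 1))) =
        ∫⁻ τ, ∫⁻ t, K (t, τ) ∂(volume.restrict (Ioo (0:ℝ) 1)) ∂(volume.restrict (Ioc (0:ℝ) 1)) :=
      lintegral_lintegral_swap hKm
    have hinner : ∀ τ ∈ Ioc (0:ℝ) 1, (∫⁻ t, K (t, τ) ∂(volume.restrict (Ioo (0:ℝ) 1))) ≤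
        ENNReal.ofReal (Pf τ) * ENNReal.ofReal ((α - 1)⁻¹) := by
      intro τ hτ
      have hKt : ∀ t, K (t, τ) = ENNReal.ofReal (ψ τ) *
          ((Iio τ).indicator (fun t => ENNReal.ofReal (t ^ (α - 2))) t) := by
        intro t
        simp only [hKdef, Set.indicator_apply, Set.mem_setOf_eq, mem_Iio]
      have hIio : Iio τ ∩ Ioo (0:ℝ) 1 = Ioo 0 τ := by
        ext t
        simp only [mem_inter_iff, mem_Iio, mem_Ioo]
        exact ⟨fun hh => ⟨hh.2.1, hh.1⟩, fun hh => ⟨hh.2, hh.1, lt_of_lt_of_le hh.2 hτ.2⟩⟩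
      have hlpow : (∫⁻ t in Ioo (0:ℝ) τ, ENNReal.ofReal (t ^ (α - 2))) =
          ENNReal.ofReal (τ ^ (α - 1) * (α - 1)⁻¹) := by
        rw [← ofReal_integral_eq_lintegral_ofReal
          ((intervalIntegrable_iff_integrableOn_Ioo_of_le hτ.1.le).1 (intervalIntegral.intervalIntegrable_rpow' hb2))
          ((ae_restrict_iff' measurableSet_Ioo).2 (Eventually.of_forall fun t ht =>
            Real.rpow_nonneg ht.1.le _))]
        congr 1
        have heq : (∫ t in Ioo (0:ℝ) τ, t ^ (α - 2)) = ∫ t in (0:ℝ)..τ, t ^ (α - 2) := by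
          rw [intervalIntegral.integral_of_le hτ.1.le, integral_Ioc_eq_integral_Ioo]
        rw [heq, integral_rpow (Or.inl hb2)]
        have h21 : α - 2 + 1 = α - 1 := by ring
        rw [h21, Real.zero_rpow hb.ne']
        ring
      calc (∫⁻ t, K (t, τ) ∂(volume.restrict (Ioo (0:ℝ) 1)))
          = ENNReal.ofReal (ψ τ) * ∫⁻ t in Ioo (0:ℝ) τ, ENNReal.ofReal (t ^ (α - 2)) := by
            rw [lintegral_congr hKt, lintegral_const_mul' _ _ ENNReal.ofReal_ne_top,
              lintegral_indicator measurableSet_Iio,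
              Measure.restrict_restrict measurableSet_Iio, hIio]
        _ = ENNReal.ofReal (ψ τ) * ENNReal.ofReal (τ ^ (α - 1) * (α - 1)⁻¹) := by rw [hlpow]
        _ ≤ ENNReal.ofReal (Pf τ) * ENNReal.ofReal ((α - 1)⁻¹) := by
            rw [ENNReal.ofReal_mul (Real.rpow_nonneg hτ.1.le _), ← mul_assoc]
            refine mul_le_mul_left ?_ _
            rw [← ENNReal.ofReal_mul (hnnψ τ hτ)]
            refine ENNReal.ofReal_le_ofReal ?_
            simp only [hψdef, hPfdef]
            calc (1 - τ) ^ (α - 1) * g τ * τ ^ (α - 1) ≤ 1 * g τ * τ ^ (α - 1) :=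
                mul_le_mul_of_nonneg_right
                  (mul_le_mul_of_nonneg_right (hψle1 τ hτ) (hnn τ hτ))
                  (Real.rpow_nonneg hτ.1.le _)
              _ = τ ^ (α - 1) * g τ := by ring
    have houter : (∫⁻ τ, ∫⁻ t, K (t, τ) ∂(volume.restrict (Ioo (0:ℝ) 1))
          ∂(volume.restrict (Ioc (0:ℝ) 1))) ≤
        (∫⁻ τ, ENNReal.ofReal (Pf τ) ∂(volume.restrict (Ioc (0:ℝ) 1))) *
          ENNReal.ofReal ((α - 1)⁻¹) := by
      rw [← lintegral_mul_const' _ _ ENNReal.ofReal_ne_top]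
      exact lintegral_mono_ae ((ae_restrict_mem measurableSet_Ioc).mono fun τ hτ => hinner τ hτ)
    have hfin : (∫⁻ τ, ENNReal.ofReal (Pf τ) ∂(volume.restrict (Ioc (0:ℝ) 1))) < ⊤ := by
      have hHf := hH.hasFiniteIntegral
      rw [hasFiniteIntegral_iff_norm] at hHf
      refine lt_of_le_of_lt (lintegral_mono fun τ => ENNReal.ofReal_le_ofReal ?_) hHf
      exact le_abs_self _
    calc (∫⁻ t, ENNReal.ofReal ‖t ^ (α - 2) * B t‖ ∂(volume.restrict (Ioo (0:ℝ) 1)))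
        ≤ (∫⁻ τ, ENNReal.ofReal (Pf τ) ∂(volume.restrict (Ioc (0:ℝ) 1))) *
          ENNReal.ofReal ((α - 1)⁻¹) := by
          rw [hstep, hswap]; exact houter
      _ < ⊤ := ENNReal.mul_lt_top hfin ENNReal.ofReal_lt_top
  -- integrability of the derivative
  have I_F2 : IntegrableOn (fun t => t ^ (α - 2) * F t) (Ioo 0 1) := by
    refine Integrable.mono' ((I_pow.const_mul (P 1)).add I_B)
      (ContinuousOn.aestronglyMeasurable (fun x hx =>
        ((Real.continuousAt_rpow_const x (α - 2) (Or.inl hx.1.ne')).mul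
          (hFd x hx).continuousAt).continuousWithinAt) measurableSet_Ioo) ?_
    refine (ae_restrict_iff' measurableSet_Ioo).2 (Eventually.of_forall fun t ht => ?_)
    have hFb : |F t| ≤ P 1 + B t := by
      rw [hFAB t]
      calc |A t + B t| ≤ |A t| + |B t| := abs_add_le _ _
        _ ≤ P 1 + B t := add_le_add (hAbd t ht.1 ht.2.le)
            (le_of_eq (abs_of_nonneg (hBnn t ht.1)))
    rw [Real.norm_eq_abs, abs_mul, abs_of_nonneg (Real.rpow_nonneg ht.1.le _)]
    calc t ^ (α - 2) * |F t| ≤ t ^ (α - 2) * (P 1 + B t) :=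
        mul_le_mul_of_nonneg_left hFb (Real.rpow_nonneg ht.1.le _)
      _ = P 1 * t ^ (α - 2) + t ^ (α - 2) * B t := by ring
  have I_D : IntegrableOn D (Ioo 0 1) := by
    have := (I_F2.const_mul (α - 1)).sub (hH.mono_set Ioo_subset_Ioc_self)
    exact this
  have hEq : EqOn D (deriv h) (Ioo 0 1) := fun t ht => ((hhd t ht).deriv).symm
  have I_deriv : IntegrableOn (deriv h) (Ioo 0 1) := I_D.congr_fun hEq measurableSet_Ioo
  -- continuity of the primitives
  have hA_cont : ContinuousOn A (Icc 0 1) := by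
    simp only [hAdef]
    exact intervalIntegral.continuousOn_primitive ((integrableOn_Icc_iff_integrableOn_Ioc enorm_ne_top).2 hφ_int)
  have hP_cont : ContinuousOn P (Icc 0 1) := by
    simp only [hPdef]
    exact intervalIntegral.continuousOn_primitive ((integrableOn_Icc_iff_integrableOn_Ioc enorm_ne_top).2 hH)
  -- continuity of h at 0 within Icc 0 1
  have hcont0 : ContinuousWithinAt h (Icc 0 1) 0 := by
    have hP0 : P 0 = 0 := by simp [hPdef]
    have h00 : h 0 = 0 := by simp [hhdef, Real.zero_rpow hb.ne']
    rw [ContinuousWithinAt, h00, Metric.tendsto_nhdsWithin_nhds]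
    intro ε hε
    have hPc : ContinuousWithinAt P (Icc 0 1) 0 := hP_cont 0 ⟨le_refl 0, zero_le_one⟩
    rw [ContinuousWithinAt, hP0, Metric.tendsto_nhdsWithin_nhds] at hPc
    obtain ⟨δ₁, hδ₁, hPδ⟩ := hPc (ε / 2) (by linarith)
    set δ : ℝ := min (δ₁ / 2) 1 with hδdef
    have hδpos : 0 < δ := lt_min (by linarith) one_pos
    have hδ1 : δ ≤ 1 := min_le_right _ _
    have hPδ2 : P δ < ε / 2 := by
      have hmem : δ ∈ Icc (0:ℝ) 1 := ⟨hδpos.le, hδ1⟩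
      have hd : dist δ 0 < δ₁ := by
        rw [Real.dist_eq, sub_zero, abs_of_pos hδpos]
        calc δ ≤ δ₁ / 2 := min_le_left _ _
          _ < δ₁ := by linarith
      have := hPδ hmem hd
      rw [Real.dist_eq, sub_zero] at this
      exact lt_of_le_of_lt (le_abs_self _) this
    have htd : Tendsto (fun u : ℝ => u ^ (α - 1) * (P 1 + B δ)) (𝓝 0) (𝓝 0) := by
      have hct : ContinuousAt (fun u : ℝ => u ^ (α - 1) * (P 1 + B δ)) 0 :=
        (Real.continuousAt_rpow_const 0 _ (Or.inr hb.le)).mul continuousAt_const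
      simpa [ContinuousAt, Real.zero_rpow hb.ne'] using hct
    rw [Metric.tendsto_nhds_nhds] at htd
    obtain ⟨δ₂, hδ₂, hδ₂p⟩ := htd (ε / 2) (by linarith)
    refine ⟨min δ δ₂, lt_min hδpos hδ₂, ?_⟩
    intro x hx hdist
    rw [Real.dist_eq, sub_zero] at hdist
    rw [Real.dist_eq, sub_zero]
    rcases eq_or_lt_of_le hx.1 with h0x | h0x
    · rw [← h0x, h00]
      simpa using hε
    · have hxδ : x ≤ δ :=
        le_of_lt (lt_of_abs_lt (lt_of_lt_of_le hdist (min_le_left _ _)))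
      have hxd2 : |x| < δ₂ := lt_of_lt_of_le hdist (min_le_right _ _)
      have hsplit := hBsplit x δ h0x hxδ hδ1
      have hb1' : x ^ (α - 1) * (∫ τ in Ioc x δ, ψ τ) ≤ P δ := by
        rw [← MeasureTheory.integral_const_mul]
        calc (∫ τ in Ioc x δ, x ^ (α - 1) * ψ τ) ≤ ∫ τ in Ioc x δ, Pf τ := by
              refine setIntegral_mono_on
                (((hψ_int x h0x (hxδ.trans hδ1)).mono_set
                  fun τ hτ => ⟨hτ.1.le, hτ.2.trans hδ1⟩).const_mul _)
                (hH.mono_set fun τ hτ => ⟨lt_trans h0x hτ.1, hτ.2.trans hδ1⟩)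
                measurableSet_Ioc fun τ hτ => ?_
              have hτ0 : 0 < τ := lt_trans h0x hτ.1
              have hτ1 : τ ≤ 1 := hτ.2.trans hδ1
              simp only [hψdef, hPfdef]
              calc x ^ (α - 1) * ((1 - τ) ^ (α - 1) * g τ) ≤ τ ^ (α - 1) * (1 * g τ) :=
                  mul_le_mul (Real.rpow_le_rpow h0x.le hτ.1.le hb.le)
                    (mul_le_mul_of_nonneg_right (hψle1 τ ⟨hτ0, hτ1⟩) (hnn τ ⟨hτ0, hτ1⟩))
                    (mul_nonneg (Real.rpow_nonneg (by linarith) _) (hnn τ ⟨hτ0, hτ1⟩))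
                    (Real.rpow_nonneg hτ0.le _)
                _ = τ ^ (α - 1) * g τ := by ring
          _ ≤ P δ := by
              simp only [hPdef]
              refine setIntegral_mono_set (hH.mono_set (Ioc_subset_Ioc_right hδ1))
                ((ae_restrict_iff' measurableSet_Ioc).2 (Eventually.of_forall fun τ hτ =>
                  hnnPf τ ⟨hτ.1, hτ.2.trans hδ1⟩))
                (HasSubset.Subset.eventuallyLE (Ioc_subset_Ioc_left h0x.le))
      have e1 : |h x| ≤ x ^ (α - 1) * |A x| + x ^ (α - 1) * B x := by
        simp only [hhdef]
        rw [hFAB x, abs_mul, abs_of_nonneg (Real.rpow_nonneg h0x.le _)]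
        calc x ^ (α - 1) * |A x + B x| ≤ x ^ (α - 1) * (|A x| + B x) := by
              refine mul_le_mul_of_nonneg_left ?_ (Real.rpow_nonneg h0x.le _)
              calc |A x + B x| ≤ |A x| + |B x| := abs_add_le _ _
                _ = |A x| + B x := by rw [abs_of_nonneg (hBnn x h0x)]
          _ = x ^ (α - 1) * |A x| + x ^ (α - 1) * B x := by ring
      have e2 : x ^ (α - 1) * B x =
          x ^ (α - 1) * (∫ τ in Ioc x δ, ψ τ) + x ^ (α - 1) * B δ := by
        rw [hsplit]; ring
      have e3 : x ^ (α - 1) * |A x| ≤ x ^ (α - 1) * P 1 :=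
        mul_le_mul_of_nonneg_left (hAbd x h0x (hxδ.trans hδ1)) (Real.rpow_nonneg h0x.le _)
      have e4 : x ^ (α - 1) * (P 1 + B δ) = x ^ (α - 1) * P 1 + x ^ (α - 1) * B δ := by ring
      have hfin1 : x ^ (α - 1) * (P 1 + B δ) < ε / 2 := by
        have := hδ₂p (by rw [Real.dist_eq, sub_zero]; exact hxd2)
        rw [Real.dist_eq, sub_zero] at this
        exact lt_of_le_of_lt (le_abs_self _) this
      calc |h x| ≤ x ^ (α - 1) * (P 1 + B δ) + P δ := by linarith
        _ < ε / 2 + ε / 2 := add_lt_add hfin1 hPδ2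
        _ = ε := by ring
  -- continuity of h at 1 within Icc 0 1
  have hcont1 : ContinuousWithinAt h (Icc 0 1) 1 := by
    have hQc : ContinuousOn (fun u => ∫ τ in Ioc (1/2 : ℝ) u, ψ τ) (Icc (1/2 : ℝ) 1) :=
      intervalIntegral.continuousOn_primitive
        ((integrableOn_Icc_iff_integrableOn_Ioc enorm_ne_top).2
          ((hψ_int (1/2) (by norm_num) (by norm_num)).mono_set Ioc_subset_Icc_self))
    set m : ℝ → ℝ := fun u =>
      u ^ (α - 1) * (A u + (B (1/2) - ∫ τ in Ioc (1/2 : ℝ) u, ψ τ)) with hmdef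
    have hmc : ContinuousOn m (Icc (1/2 : ℝ) 1) := by
      refine ContinuousOn.mul ?_
        ((hA_cont.mono (Icc_subset_Icc_left (by norm_num))).add (continuousOn_const.sub hQc))
      intro u hu
      exact (Real.continuousAt_rpow_const u _
        (Or.inl (ne_of_gt (lt_of_lt_of_le one_half_pos hu.1)))).continuousWithinAt
    have heq : EqOn h m (Icc 0 1 ∩ Ioi (1/2 : ℝ)) := by
      intro u hu
      have hsp := hBsplit (1/2) u (by norm_num) hu.2.le hu.1.2
      have hBu : B u = B (1/2) - ∫ τ in Ioc (1/2 : ℝ) u, ψ τ := by linarith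
      simp only [hhdef, hmdef]
      rw [hFAB u, hBu]
    have hm1 : ContinuousWithinAt m (Icc 0 1 ∩ Ioi (1/2 : ℝ)) 1 :=
      (hmc 1 ⟨by norm_num, le_refl 1⟩).mono fun u hu => ⟨hu.2.le, hu.1.2⟩
    have hh1 : ContinuousWithinAt h (Icc 0 1 ∩ Ioi (1/2 : ℝ)) 1 :=
      hm1.congr heq (heq ⟨⟨by norm_num, le_refl 1⟩, by norm_num⟩)
    exact hh1.mono_of_mem_nhdsWithin (inter_mem_nhdsWithin _ (Ioi_mem_nhds (by norm_num)))
  have hhcont : ContinuousOn h (Icc 0 1) := by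
    intro y hy
    rcases eq_or_lt_of_le hy.1 with h0y | h0y
    · subst h0y; exact hcont0
    rcases eq_or_lt_of_le hy.2 with hy1 | hy1
    · subst hy1; exact hcont1
    · exact ((hhd y ⟨h0y, hy1⟩).continuousAt).continuousWithinAt
  constructor
  · exact I_deriv.abs
  · intro x hx
    have f'int : IntervalIntegrable (deriv h) volume 0 x :=
      (intervalIntegrable_iff_integrableOn_Ioo_of_le hx.1).2
        (I_deriv.mono_set (Ioo_subset_Ioo_right hx.2))
    have key := intervalIntegral.integral_eq_sub_of_hasDeriv_right_of_le hx.1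
      (hhcont.mono (Icc_subset_Icc_right hx.2))
      (fun t ht => (hEq ⟨ht.1, lt_of_lt_of_le ht.2 hx.2⟩ ▸
        (hhd t ⟨ht.1, lt_of_lt_of_le ht.2 hx.2⟩).hasDerivWithinAt))
      f'int
    rw [key]
    simp only [hhdef]
    ring
end
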